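/- arXiv:2012.01408 — 3 statements merged into one kernel-verified Lean document; each statement's English description precedes it below -/
import Mathlib

section
/- Let R be a commutative ring, let x, y ∈ SL₂(R), let ε ∈ {1, −1}, and set y₁ = x²·y·x^{2ε}·y⁻¹. Then for every integer k ≥ 1, tr(x² · y₁^{−k}) = tr(x²) · ( Σ_{i=1}^{k−1} (−1)^{(k−1)−i} tr(y₁^{i}) + (−1)^{k−1} ). -/
/-!
Put `u = x²` and `v = y x^{2ε} y⁻¹`, so that `y₁ = u v` and `tr u = tr v` (for `ε = -1`
since `tr g⁻¹ = tr g` in `SL₂`). Cayley–Hamilton gives `tr (u (uv)ⁿ) = tr (v (uv)ⁿ)` for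
all `n`, whence `tr (u (uv)^{-(m+1)}) = tr (u (uv)^m) =: a_m`. The identity
`tr (g h⁻¹) = tr g tr h - tr (g h)` then yields the recurrence
`a_{m+1} + a_m = tr u · tr ((uv)^{m+1})`, solved by the alternating sum.
-/

namespace Matrix

variable {R : Type*} [CommRing R]

theorem adjugate_fin_two_eq_trace_smul_one_sub (A : Matrix (Fin 2) (Fin 2) R) :
    adjugate A = A.trace • 1 - A := by
  ext i j
  fin_cases i <;> fin_cases j <;> simp [adjugate_fin_two, trace_fin_two]

theorem mul_self_fin_two (A : Matrix (Fin 2) (Fin 2) R) :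
    A * A = A.trace • A - A.det • 1 := by
  have h := mul_adjugate A
  rw [adjugate_fin_two_eq_trace_smul_one_sub, mul_sub, Matrix.mul_smul, mul_one] at h
  rw [← h]
  abel

theorem trace_mul_mul_pow_eq_of_trace_eq_of_det_eq {A B : Matrix (Fin 2) (Fin 2) R}
    (htr : A.trace = B.trace) (hdet : A.det = B.det) (n : ℕ) :
    trace (A * (A * B) ^ n) = trace (B * (A * B) ^ n) := by
  rw [← sub_eq_zero, ← trace_sub, ← sub_mul]
  induction n using Nat.twoStepInduction with
  | zero => simp [trace_sub, htr]
  | one =>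
    have hcycle : trace (B * (A * B)) = trace (A * (B * B)) := by
      rw [trace_mul_comm, mul_assoc]
    rw [pow_one, sub_mul, trace_sub, ← mul_assoc, hcycle, mul_self_fin_two, mul_self_fin_two]
    simp only [sub_mul, mul_sub, smul_mul, Matrix.mul_smul, one_mul, mul_one, trace_sub,
      trace_smul, smul_eq_mul, htr, hdet]
    ring
  | more n ih₀ ih₁ =>
    -- Cayley–Hamilton for `A * B` makes `tr ((A - B) (A B)ⁿ)` a linear recurrence of order two.
    rw [pow_succ, pow_succ, mul_assoc _ (A * B), mul_self_fin_two, mul_sub, Matrix.mul_smul, Matrix.mul_smul, mul_one, ← pow_succ, mul_sub,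
      Matrix.mul_smul, Matrix.mul_smul, trace_sub, trace_smul, trace_smul, ih₀, ih₁, smul_zero,
      smul_zero, sub_zero]

end Matrix

theorem eq_alternating_sum_of_add_eq {R : Type*} [CommRing R] {a s : ℕ → R} {c : R}
    (h₀ : a 0 = c) (hrec : ∀ m, a (m + 1) + a m = c * s (m + 1)) (m : ℕ) :
    a m = c * (∑ i ∈ Finset.Icc 1 m, (-1) ^ (m - i) * s i + (-1) ^ m) := by
  induction m with
  | zero => simp [h₀]
  | succ m ih =>
    have hsum : ∑ i ∈ Finset.Icc 1 m, (-1 : R) ^ (m + 1 - i) * s i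
        = -∑ i ∈ Finset.Icc 1 m, (-1) ^ (m - i) * s i := by
      rw [← Finset.sum_neg_distrib]
      refine Finset.sum_congr rfl fun i hi => ?_
      rw [Nat.sub_add_comm (Finset.mem_Icc.mp hi).2, pow_succ]
      ring
    rw [Finset.sum_Icc_succ_top (Nat.le_add_left 1 m), hsum, Nat.sub_self, pow_zero,
      eq_sub_of_add_eq (hrec m), ih]
    ring

namespace Matrix.SpecialLinearGroup

open scoped MatrixGroups

variable {n R : Type*} [Fintype n] [DecidableEq n] [CommRing R]

theorem trace_coe_mul_comm (g h : SpecialLinearGroup n R) :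
    trace (↑(g * h) : Matrix n n R) = trace (↑(h * g) : Matrix n n R) := by
  rw [coe_mul, coe_mul, trace_mul_comm]

theorem trace_coe_conj (g h : SpecialLinearGroup n R) :
    trace (↑(h * g * h⁻¹) : Matrix n n R) = trace (g : Matrix n n R) := by
  rw [trace_coe_mul_comm, inv_mul_cancel_left]

variable (g h : SL(2, R))

theorem coe_inv_fin_two :
    (↑g⁻¹ : Matrix (Fin 2) (Fin 2) R) = trace (g : Matrix (Fin 2) (Fin 2) R) • 1 - g := by
  rw [coe_inv, adjugate_fin_two_eq_trace_smul_one_sub]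

theorem trace_coe_inv_fin_two :
    trace (↑g⁻¹ : Matrix (Fin 2) (Fin 2) R) = trace (g : Matrix (Fin 2) (Fin 2) R) := by
  rw [coe_inv_fin_two, trace_sub, trace_smul, trace_one, Fintype.card_fin, smul_eq_mul]
  ring

theorem trace_coe_mul_inv_fin_two :
    trace (↑(g * h⁻¹) : Matrix (Fin 2) (Fin 2) R)
      = trace (g : Matrix (Fin 2) (Fin 2) R) * trace (h : Matrix (Fin 2) (Fin 2) R)
        - trace (↑(g * h) : Matrix (Fin 2) (Fin 2) R) := by
  rw [coe_mul, coe_inv_fin_two, mul_sub, Matrix.mul_smul, mul_one, trace_sub, trace_smul,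
    smul_eq_mul, coe_mul, mul_comm]

variable {g h}

theorem trace_coe_mul_inv_mul_pow_succ
    (htr : trace (g : Matrix (Fin 2) (Fin 2) R) = trace (h : Matrix (Fin 2) (Fin 2) R)) (m : ℕ) :
    trace (↑(g * ((g * h) ^ (m + 1))⁻¹) : Matrix (Fin 2) (Fin 2) R)
      = trace (↑(g * (g * h) ^ m) : Matrix (Fin 2) (Fin 2) R) := by
  have hconj : g * ((g * h) ^ (m + 1))⁻¹ = g * (h * (g * h) ^ m)⁻¹ * g⁻¹ := by
    simp only [pow_succ', _root_.mul_inv_rev, mul_assoc]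
  rw [hconj, trace_coe_conj, trace_coe_inv_fin_two, coe_mul, coe_mul, coe_pow, coe_mul,
    Matrix.trace_mul_mul_pow_eq_of_trace_eq_of_det_eq htr (by rw [det_coe, det_coe])]

theorem trace_coe_mul_pow_succ_add
    (htr : trace (g : Matrix (Fin 2) (Fin 2) R) = trace (h : Matrix (Fin 2) (Fin 2) R)) (m : ℕ) :
    trace (↑(g * (g * h) ^ (m + 1)) : Matrix (Fin 2) (Fin 2) R)
      + trace (↑(g * (g * h) ^ m) : Matrix (Fin 2) (Fin 2) R)
      = trace (g : Matrix (Fin 2) (Fin 2) R)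
        * trace (↑((g * h) ^ (m + 1)) : Matrix (Fin 2) (Fin 2) R) := by
  rw [← trace_coe_mul_inv_mul_pow_succ htr m, trace_coe_mul_inv_fin_two, add_sub_cancel]

theorem trace_coe_mul_mul_pow_eq_sum
    (htr : trace (g : Matrix (Fin 2) (Fin 2) R) = trace (h : Matrix (Fin 2) (Fin 2) R)) (m : ℕ) :
    trace (↑(g * (g * h) ^ m) : Matrix (Fin 2) (Fin 2) R)
      = trace (g : Matrix (Fin 2) (Fin 2) R)
        * (∑ i ∈ Finset.Icc 1 m,
            (-1) ^ (m - i) * trace (↑((g * h) ^ i) : Matrix (Fin 2) (Fin 2) R) + (-1) ^ m) :=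
  eq_alternating_sum_of_add_eq
    (a := fun m ↦ trace (↑(g * (g * h) ^ m) : Matrix (Fin 2) (Fin 2) R))
    (by rw [pow_zero, mul_one]) (trace_coe_mul_pow_succ_add htr) m

end Matrix.SpecialLinearGroup

open Matrix.SpecialLinearGroup in
theorem trace_sq_mul_pow_neg_eq_sum_general
    (R : Type*) [CommRing R] (x y : Matrix.SpecialLinearGroup (Fin 2) R)
    (ε : ℤ) (hε : ε = 1 ∨ ε = -1) (k : ℕ) :
    Matrix.trace
      ((x ^ 2 * (x ^ 2 * y * x ^ (2 * ε) * y⁻¹) ^ (-(k : ℤ)) :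
        Matrix.SpecialLinearGroup (Fin 2) R) : Matrix (Fin 2) (Fin 2) R)
    = Matrix.trace ((x ^ 2 : Matrix.SpecialLinearGroup (Fin 2) R) : Matrix (Fin 2) (Fin 2) R)
        * (∑ i ∈ Finset.Icc 1 (k - 1), (-1 : R) ^ ((k - 1) - i) *
            Matrix.trace (((x ^ 2 * y * x ^ (2 * ε) * y⁻¹) ^ i :
              Matrix.SpecialLinearGroup (Fin 2) R) : Matrix (Fin 2) (Fin 2) R)
          + (-1 : R) ^ (k - 1)) := by
  rcases k with _ | m
  · simp
  have hy₁ : x ^ 2 * y * x ^ (2 * ε) * y⁻¹ = x ^ 2 * (y * x ^ (2 * ε) * y⁻¹) := by group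
  have htr : Matrix.trace (↑(x ^ 2) : Matrix (Fin 2) (Fin 2) R)
      = Matrix.trace (↑(y * x ^ (2 * ε) * y⁻¹) : Matrix (Fin 2) (Fin 2) R) := by
    rw [trace_coe_conj]
    rcases hε with rfl | rfl
    · norm_num
    · rw [show x ^ (2 * (-1 : ℤ)) = (x ^ 2)⁻¹ by group, trace_coe_inv_fin_two]
  rw [hy₁, zpow_neg, zpow_natCast, Nat.add_sub_cancel, trace_coe_mul_inv_mul_pow_succ htr]
  exact trace_coe_mul_mul_pow_eq_sum htr m

/-- Negative-exponent summation formula of Lemma 2.2: for `x, y ∈ SL₂(R)`, `ε = ±1`,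
`y₁ = x²·y·x^{2ε}·y⁻¹` and any integer `k ≥ 1`,
`tr(x² · y₁^{-k}) = tr(x²)·(∑_{i=1}^{k-1} (-1)^{(k-1)-i} tr(y₁^i) + (-1)^{k-1})`. -/
theorem trace_sq_mul_pow_neg_eq_sum
    (R : Type*) [CommRing R] (x y : Matrix.SpecialLinearGroup (Fin 2) R)
    (ε : ℤ) (hε : ε = 1 ∨ ε = -1) (k : ℕ) (hk : 1 ≤ k) :
    Matrix.trace
      ((x ^ 2 * (x ^ 2 * y * x ^ (2 * ε) * y⁻¹) ^ (-(k : ℤ)) :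
        Matrix.SpecialLinearGroup (Fin 2) R) : Matrix (Fin 2) (Fin 2) R)
    = Matrix.trace ((x ^ 2 : Matrix.SpecialLinearGroup (Fin 2) R) : Matrix (Fin 2) (Fin 2) R)
        * (∑ i ∈ Finset.Icc 1 (k - 1), (-1 : R) ^ ((k - 1) - i) *
            Matrix.trace (((x ^ 2 * y * x ^ (2 * ε) * y⁻¹) ^ i :
              Matrix.SpecialLinearGroup (Fin 2) R) : Matrix (Fin 2) (Fin 2) R)
          + (-1 : R) ^ (k - 1)) :=
  trace_sq_mul_pow_neg_eq_sum_general R x y ε hε k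
end

section
/- Let k ≥ 1 be an integer, let ε ∈ {1, −1}, let x, y ∈ SL₂(ℂ), and set y₁ = x²·y·x^{2ε}·y⁻¹. Then tr(x² · y₁^{k}) = ( tr(x)² − 2 ) · Π_{j=1}^{k} ( tr(y₁) + 2·cos(2πj/(2k+1)) ). -/
/-!
In `SL₂` one has `tr (g * h) + tr (g * h⁻¹) = tr g * tr h`. Since `x² * y₁⁻¹` is conjugate to
`x^(-2ε)`, `tr (x² * y₁⁻¹) = tr (x²)`, so `aₙ = tr (x² * y₁ⁿ)` satisfies
`aₙ₊₂ = tr y₁ * aₙ₊₁ - aₙ` with `a₋₁ = a₀`. Hence `aₙ = tr (x²) * Vₙ (tr y₁)`, where `Vₙ` is the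
rescaled Chebyshev polynomial of the third kind: `zⁿ (z + 1) Vₙ (z + z⁻¹) = z^(2n+1) + 1`.
Pairing the roots `-ζʲ`, `-ζ⁻ʲ` of `z^(2n+1) + 1` shows that the roots of `Vₙ` are
`-(ζʲ + ζ⁻ʲ) = -2 cos (2πj / (2n+1))`, `1 ≤ j ≤ n`.
-/

open Polynomial Finset
open scoped MatrixGroups

/-- Chebyshev polynomials of the third kind, rescaled: `chebyshevThirdKind R n (2 * x) = Vₙ x`. -/
noncomputable def chebyshevThirdKind (R : Type*) [CommRing R] : ℕ → R[X]
  | 0 => 1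
  | 1 => X - 1
  | n + 2 => X * chebyshevThirdKind R (n + 1) - chebyshevThirdKind R n

section ChebyshevThirdKind

variable {R : Type*} [CommRing R]

@[simp]
theorem chebyshevThirdKind_zero : chebyshevThirdKind R 0 = 1 := rfl

@[simp]
theorem chebyshevThirdKind_one : chebyshevThirdKind R 1 = X - 1 := rfl

theorem chebyshevThirdKind_add_two (n : ℕ) :
    chebyshevThirdKind R (n + 2) = X * chebyshevThirdKind R (n + 1) - chebyshevThirdKind R n :=
  rfl

end ChebyshevThirdKind

theorem eval_add_inv_chebyshevThirdKind {K : Type*} [Field K] {z : K} (hz : z ≠ 0) (n : ℕ) :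
    z ^ n * (z + 1) * (chebyshevThirdKind K n).eval (z + z⁻¹) = z ^ (2 * n + 1) + 1 := by
  induction n using Nat.twoStepInduction with
  | zero => simp
  | one =>
    simp only [chebyshevThirdKind_one, eval_sub, eval_X, eval_one]
    field_simp
    ring
  | more n ih₀ ih₁ =>
    rw [chebyshevThirdKind_add_two, eval_sub, eval_mul, eval_X]
    linear_combination (z ^ 2 + 1) * ih₁ - z ^ 2 * ih₀ +
      z ^ (n + 1) * (z + 1) * (chebyshevThirdKind K (n + 1)).eval (z + z⁻¹) * mul_inv_cancel₀ hz

theorem Finset.prod_range_two_mul_add_one {M : Type*} [CommMonoid M] (f : ℕ → M) (n : ℕ) :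
    ∏ i ∈ range (2 * n + 1), f i = f 0 * ∏ j ∈ Icc 1 n, f j * f (2 * n + 1 - j) := by
  have hreflect :
      ∏ j ∈ Ico 1 (n + 1), f (2 * n + 1 - j) = ∏ j ∈ Ico (n + 1) (2 * n + 1), f j := by
    rw [prod_Ico_reflect f 1 (by omega)]
    congr 2
    omega
  rw [prod_mul_distrib, ← Ico_add_one_right_eq_Icc, hreflect,
    prod_Ico_consecutive _ (by omega) (by omega), range_eq_Ico,
    prod_eq_prod_Ico_succ_bot (by omega)]

theorem IsPrimitiveRoot.pow_add_one_eq_prod {R : Type*} [CommRing R] [IsDomain R] {ζ : R} {n : ℕ}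
    (hζ : IsPrimitiveRoot ζ n) (hn : Odd n) (z : R) :
    z ^ n + 1 = ∏ i ∈ range n, (z + ζ ^ i) := by
  simpa [eval_prod] using congrArg (eval z) (X_pow_sub_C_eq_prod hζ hn.pos hn.neg_one_pow)

theorem IsPrimitiveRoot.pow_add_one_eq_mul_prod {K : Type*} [Field K] {ζ : K} {n : ℕ}
    (hζ : IsPrimitiveRoot ζ (2 * n + 1)) (z : K) :
    z ^ (2 * n + 1) + 1 = (z + 1) * ∏ j ∈ Icc 1 n, (z + ζ ^ j) * (z + ζ⁻¹ ^ j) := by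
  rw [hζ.pow_add_one_eq_prod ⟨n, rfl⟩, prod_range_two_mul_add_one, pow_zero]
  refine congrArg _ (prod_congr rfl fun j hj => ?_)
  rw [pow_sub₀ ζ (hζ.ne_zero (by omega)) (by simp at hj; omega), hζ.pow_eq_one, one_mul, inv_pow]

theorem IsAlgClosed.exists_add_inv_eq {K : Type*} [Field K] [IsAlgClosed K] (t : K) :
    ∃ z : K, z ≠ 0 ∧ z + z⁻¹ = t := by
  have hdeg : (X ^ 2 - C t * X + 1 : K[X]).degree = 2 := by compute_degree!
  obtain ⟨z, hz⟩ := IsAlgClosed.exists_root (X ^ 2 - C t * X + 1) (by rw [hdeg]; decide)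
  have hz : z * (t - z) = 1 := by
    simp only [IsRoot, eval_add, eval_sub, eval_mul, eval_pow, eval_X, eval_C, eval_one] at hz
    linear_combination -hz
  refine ⟨z, left_ne_zero_of_mul_eq_one hz, ?_⟩
  rw [inv_eq_of_mul_eq_one_right hz, add_sub_cancel]

theorem chebyshevThirdKind_eq_prod {K : Type*} [Field K] [IsAlgClosed K] {ζ : K} {n : ℕ}
    (hζ : IsPrimitiveRoot ζ (2 * n + 1)) :
    chebyshevThirdKind K n = ∏ j ∈ Icc 1 n, (X + C (ζ ^ j + ζ⁻¹ ^ j)) := by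
  -- Every `t ≠ -2` is `z + z⁻¹` with `z ≠ 0, -1`, and there both sides are
  -- `(z^(2n+1) + 1) / (zⁿ (z + 1))`.
  refine eq_of_infinite_eval_eq _ _ <|
    (Set.finite_singleton (-2 : K)).infinite_compl.mono fun t (ht : t ≠ -2) => ?_
  obtain ⟨z, hz, rfl⟩ := IsAlgClosed.exists_add_inv_eq t
  have hz₁ : z + 1 ≠ 0 := fun h => ht (by rw [eq_neg_of_add_eq_zero_left h]; norm_num)
  have hfactor (j : ℕ) : z * (z + z⁻¹ + (ζ ^ j + ζ⁻¹ ^ j)) = (z + ζ ^ j) * (z + ζ⁻¹ ^ j) := by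
    have hζj : ζ ^ j * ζ⁻¹ ^ j = 1 := by
      rw [← mul_pow, mul_inv_cancel₀ (hζ.ne_zero (by omega)), one_pow]
    linear_combination mul_inv_cancel₀ hz - hζj
  refine mul_left_cancel₀ (mul_ne_zero (pow_ne_zero n hz) hz₁) ?_
  simp only [eval_prod, eval_add, eval_X, eval_C]
  rw [eval_add_inv_chebyshevThirdKind hz, hζ.pow_add_one_eq_mul_prod, mul_comm (z ^ n), mul_assoc]
  simp only [← hfactor, prod_mul_distrib, prod_const, Nat.card_Icc, add_tsub_cancel_right]

open Complex in
theorem chebyshevThirdKind_complex_eq_prod_cos (n : ℕ) :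
    chebyshevThirdKind ℂ n = ∏ j ∈ Icc 1 n, (X + C (2 * cos (2 * Real.pi * j / (2 * n + 1)))) := by
  rw [chebyshevThirdKind_eq_prod (isPrimitiveRoot_exp (2 * n + 1) (by omega))]
  refine prod_congr rfl fun j _ => ?_
  rw [two_cos, ← exp_neg, ← exp_nat_mul, ← exp_nat_mul]
  push_cast
  ring_nf

namespace Matrix.SpecialLinearGroup

variable {R : Type*} [CommRing R]

local notation "tr" g:max => Matrix.trace ((g : SL(2, R)) : Matrix (Fin 2) (Fin 2) R)

theorem trace_mul_add_trace_mul_inv (g h : SL(2, R)) :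
    tr (g * h) + tr (g * h⁻¹) = tr g * tr h := by
  have hh : (h : Matrix (Fin 2) (Fin 2) R) + (h⁻¹ : SL(2, R)) = tr h • 1 := by
    rw [coe_inv, adjugate_fin_two, trace_fin_two]
    ext i j
    fin_cases i <;> fin_cases j <;> simp [add_comm]
  rw [coe_mul, coe_mul, ← trace_add, ← Matrix.mul_add, hh, Matrix.mul_smul, mul_one, trace_smul,
    smul_eq_mul, mul_comm]

theorem trace_inv (g : SL(2, R)) : tr g⁻¹ = tr g := by
  simpa [two_mul] using trace_mul_add_trace_mul_inv 1 g

theorem trace_conj (g h : SL(2, R)) : tr (g * h * g⁻¹) = tr h := by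
  rw [coe_mul, trace_mul_comm, ← coe_mul, inv_mul_cancel_left]

theorem trace_sq (g : SL(2, R)) : tr (g ^ 2) = tr g ^ 2 - 2 := by
  have h := trace_mul_add_trace_mul_inv g g
  rw [mul_inv_cancel, ← sq, coe_one, trace_one, Fintype.card_fin, Nat.cast_ofNat] at h
  linear_combination h

theorem trace_mul_pow_eq_eval_chebyshevThirdKind (h g : SL(2, R)) (hg : tr (h * g⁻¹) = tr h)
    (n : ℕ) : tr (h * g ^ n) = tr h * (chebyshevThirdKind R n).eval (tr g) := by
  induction n using Nat.twoStepInduction with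
  | zero => simp
  | one =>
    have h₁ := trace_mul_add_trace_mul_inv h g
    rw [hg] at h₁
    simp only [chebyshevThirdKind_one, eval_sub, eval_X, eval_one, pow_one]
    linear_combination h₁
  | more n ih₀ ih₁ =>
    have h₁ := trace_mul_add_trace_mul_inv (h * g ^ (n + 1)) g
    rw [show h * g ^ (n + 1) * g = h * g ^ (n + 2) by group,
      show h * g ^ (n + 1) * g⁻¹ = h * g ^ n by group] at h₁
    rw [chebyshevThirdKind_add_two, eval_sub, eval_mul, eval_X]
    linear_combination h₁ - ih₀ + tr g * ih₁

end Matrix.SpecialLinearGroup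

open Matrix Matrix.SpecialLinearGroup in
theorem trace_sq_mul_pow_eq_prod_cos_general
    (k : ℕ) (ε : ℤ) (hε : ε = 1 ∨ ε = -1)
    (x y : Matrix.SpecialLinearGroup (Fin 2) ℂ) :
    Matrix.trace
      ((x ^ 2 * (x ^ 2 * y * x ^ (2 * ε) * y⁻¹) ^ k :
        Matrix.SpecialLinearGroup (Fin 2) ℂ) : Matrix (Fin 2) (Fin 2) ℂ)
    = (Matrix.trace ((x : Matrix (Fin 2) (Fin 2) ℂ)) ^ 2 - 2)
        * ∏ j ∈ Finset.Icc 1 k,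
            (Matrix.trace (((x ^ 2 * y * x ^ (2 * ε) * y⁻¹) :
                Matrix.SpecialLinearGroup (Fin 2) ℂ) : Matrix (Fin 2) (Fin 2) ℂ)
              + 2 * Complex.cos (2 * Real.pi * j / (2 * k + 1))) := by
  have hy₁ :
      trace ((x ^ 2 * (x ^ 2 * y * x ^ (2 * ε) * y⁻¹)⁻¹ : SL(2, ℂ)) : Matrix (Fin 2) (Fin 2) ℂ) =
        trace ((x ^ 2 : SL(2, ℂ)) : Matrix (Fin 2) (Fin 2) ℂ) := by
    rw [show x ^ 2 * (x ^ 2 * y * x ^ (2 * ε) * y⁻¹)⁻¹ =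
      x ^ 2 * y * x ^ (-(2 * ε)) * (x ^ 2 * y)⁻¹ by group, SpecialLinearGroup.trace_conj]
    rcases hε with rfl | rfl
    · rw [← trace_inv]
      norm_num
    · norm_num
  rw [trace_mul_pow_eq_eval_chebyshevThirdKind _ _ hy₁, trace_sq,
    chebyshevThirdKind_complex_eq_prod_cos, eval_prod]
  simp only [eval_add, eval_X, eval_C]

/-- Fully factorized form of Lemma 2.2 over ℂ: for `x, y ∈ SL₂(ℂ)`, `ε = ±1`,
`y₁ = x²·y·x^{2ε}·y⁻¹` and `k ≥ 1`,
`tr(x² · y₁^k) = (tr(x)² - 2) · ∏_{j=1}^{k} (tr(y₁) + 2·cos(2πj/(2k+1)))`. -/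
theorem trace_sq_mul_pow_eq_prod_cos
    (k : ℕ) (hk : 1 ≤ k) (ε : ℤ) (hε : ε = 1 ∨ ε = -1)
    (x y : Matrix.SpecialLinearGroup (Fin 2) ℂ) :
    Matrix.trace
      ((x ^ 2 * (x ^ 2 * y * x ^ (2 * ε) * y⁻¹) ^ k :
        Matrix.SpecialLinearGroup (Fin 2) ℂ) : Matrix (Fin 2) (Fin 2) ℂ)
    = (Matrix.trace ((x : Matrix (Fin 2) (Fin 2) ℂ)) ^ 2 - 2)
        * ∏ j ∈ Finset.Icc 1 k,
            (Matrix.trace (((x ^ 2 * y * x ^ (2 * ε) * y⁻¹) :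
                Matrix.SpecialLinearGroup (Fin 2) ℂ) : Matrix (Fin 2) (Fin 2) ℂ)
              + 2 * Complex.cos (2 * Real.pi * j / (2 * k + 1))) :=
  trace_sq_mul_pow_eq_prod_cos_general k ε hε x y
end

section
/- Let k ≥ 1 be an integer and ε ∈ {1, −1}. Let p be a prime not dividing 2k+1, let n be an odd positive integer such that 2 is not a square in ℤ/pℤ, and suppose that for some primitive (2k+1)-th root of unity ζ in an algebraic closure of 𝔽_{p^n}, the element ζ^{i} + ζ^{−i} does not lie in (the image of) 𝔽_{p^n} for every 1 ≤ i ≤ k. Then for all x, y ∈ SL₂(𝔽_{p^n}), the trace of x² · (x²·y·x^{2ε}·y⁻¹)^{k} is nonzero; in particular, no element of SL₂(𝔽_{p^n}) of trace zero lies in the image of the map (x, y) ↦ x² · (x²·y·x^{2ε}·y⁻¹)^{k}. -/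
/-!
Put `u = x²` and `v = y x^{2ε} y⁻¹`. In `SL₂` the trace is invariant under conjugation and
inversion, so `tr v = tr u`, and Cayley–Hamilton turns the traces of `u (uv)^j` into a
second-order linear recurrence in `j`: `tr (u (uv)^k) = tr u · W_k (tr uv)`, where `W_k` is the
Chebyshev polynomial of the fourth kind (`W_0 = 1`, `W_1 = T - 1`).

The factor `tr u = (tr x)² - 2` is nonzero because `2`, a non-square mod `p`, stays a non-square
in `𝔽_{p^n}` for odd `n` (as `p^n ≡ p mod 8`). For the other factor write `T = λ + λ⁻¹` in the
algebraic closure; then `λ^k (λ + 1) W_k(T) = λ^{2k+1} + 1`, so a root `T` of `W_k` yields a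
`(2k+1)`-th root of unity `μ = -λ` with `T = -(μ + μ⁻¹)`. The case `μ = 1` is impossible since
`W_k(-2) = ±(2k+1)` and the existence of `ζ` forces `2k+1 ≠ 0`; otherwise `μ = ζ^{±i}` with
`1 ≤ i ≤ k`, and `T ∈ 𝔽_{p^n}` contradicts the hypothesis on `ζ`.
-/

variable {R : Type*} [CommRing R]

def chebyshevW (T : R) : ℕ → R
  | 0 => 1
  | 1 => T - 1
  | j + 2 => T * chebyshevW T (j + 1) - chebyshevW T j

theorem chebyshevW_add_two (T : R) (j : ℕ) :
    chebyshevW T (j + 2) = T * chebyshevW T (j + 1) - chebyshevW T j := rfl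

theorem map_chebyshevW {S : Type*} [CommRing S] (f : R →+* S) (T : R) :
    ∀ j, f (chebyshevW T j) = chebyshevW (f T) j
  | 0 => map_one f
  | 1 => by simp [chebyshevW]
  | j + 2 => by simp [chebyshevW_add_two, map_chebyshevW f T j, map_chebyshevW f T (j + 1)]

theorem chebyshevW_neg_two : ∀ j, chebyshevW (-2 : R) j = (-1) ^ j * (2 * j + 1)
  | 0 => by simp [chebyshevW]
  | 1 => by simp only [chebyshevW]; ring
  | j + 2 => by
    rw [chebyshevW_add_two, chebyshevW_neg_two j, chebyshevW_neg_two (j + 1)]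
    push_cast; ring

theorem pow_mul_chebyshevW {T l : R} (hl : l * T = l ^ 2 + 1) :
    ∀ j, l ^ j * (l + 1) * chebyshevW T j = l ^ (2 * j + 1) + 1
  | 0 => by simp [chebyshevW]
  | 1 => by simp only [chebyshevW]; linear_combination (l + 1) * hl
  | j + 2 => by
    have h0 := pow_mul_chebyshevW hl j
    have h1 := pow_mul_chebyshevW hl (j + 1)
    rw [chebyshevW_add_two]
    linear_combination (l * T) * h1 - l ^ 2 * h0 + (l ^ (2 * j + 3) + 1) * hl

theorem IsPrimitiveRoot.exists_add_inv_eq {K : Type*} [Field K] {ζ μ : K} {k : ℕ}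
    (hζ : IsPrimitiveRoot ζ (2 * k + 1)) (hμ : μ ^ (2 * k + 1) = 1) (hμ1 : μ ≠ 1) :
    ∃ i ∈ Finset.Icc 1 k, μ + μ⁻¹ = ζ ^ (i : ℤ) + ζ ^ (-(i : ℤ)) := by
  obtain ⟨i, hi, rfl⟩ := hζ.eq_pow_of_pow_eq_one hμ
  have hi0 : i ≠ 0 := by rintro rfl; exact hμ1 (pow_zero ζ)
  by_cases hik : i ≤ k
  · exact ⟨i, Finset.mem_Icc.mpr ⟨by omega, hik⟩, by simp [zpow_neg]⟩
  · refine ⟨2 * k + 1 - i, Finset.mem_Icc.mpr ⟨by omega, by omega⟩, ?_⟩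
    have hinv : ζ ^ (2 * k + 1 - i) = (ζ ^ i)⁻¹ :=
      eq_inv_of_mul_eq_one_left (by rw [← pow_add, Nat.sub_add_cancel hi.le, hζ.pow_eq_one])
    rw [zpow_neg, zpow_natCast, hinv, inv_inv, add_comm]

open Polynomial in
theorem chebyshevW_ne_zero {L : Type*} [Field L] [IsAlgClosed L] {ζ : L} {k : ℕ}
    (hζ : IsPrimitiveRoot ζ (2 * k + 1)) {T : L}
    (hT : ∀ i ∈ Finset.Icc 1 k, T ≠ -(ζ ^ (i : ℤ) + ζ ^ (-(i : ℤ)))) :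
    chebyshevW T k ≠ 0 := by
  intro hW
  obtain ⟨l, hl⟩ : ∃ l : L, l * T = l ^ 2 + 1 := by
    obtain ⟨l, hl⟩ := IsAlgClosed.exists_root (X ^ 2 - C T * X + 1)
      (ne_of_eq_of_ne (by compute_degree!) two_ne_zero)
    simp only [IsRoot.def, eval_add, eval_sub, eval_pow, eval_X, eval_mul, eval_C, eval_one] at hl
    exact ⟨l, by linear_combination -hl⟩
  have hl0 : l ≠ 0 := by rintro rfl; simp at hl
  have hT_eq : T = -(-l + (-l)⁻¹) := by field_simp; linear_combination hl
  have hμ : (-l) ^ (2 * k + 1) = 1 := by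
    have h := pow_mul_chebyshevW hl k
    rw [hW, mul_zero] at h
    rw [Odd.neg_pow ⟨k, rfl⟩]
    linear_combination h
  by_cases hμ1 : -l = 1
  · have h2k : (2 * k + 1 : L) ≠ 0 := by exact_mod_cast hζ.neZero'.out
    rw [show T = -2 by rw [hT_eq, hμ1]; norm_num, chebyshevW_neg_two] at hW
    exact h2k ((mul_eq_zero.mp hW).resolve_left (pow_ne_zero _ (neg_ne_zero.mpr one_ne_zero)))
  · obtain ⟨i, hi, hμi⟩ := hζ.exists_add_inv_eq hμ hμ1
    exact hT i hi (hT_eq.trans (by rw [hμi]))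

namespace Matrix.SpecialLinearGroup

theorem trace_conj_s10 {n : Type*} [Fintype n] [DecidableEq n] (g h : SpecialLinearGroup n R) :
    trace (↑(g * h * g⁻¹) : Matrix n n R) = trace (h : Matrix n n R) := by
  rw [coe_mul, coe_mul, trace_mul_cycle, ← coe_mul, inv_mul_cancel, coe_one, one_mul]

theorem trace_inv_fin_two (g : SpecialLinearGroup (Fin 2) R) :
    trace (↑g⁻¹ : Matrix (Fin 2) (Fin 2) R) = trace (g : Matrix (Fin 2) (Fin 2) R) := by
  rw [coe_inv, adjugate_fin_two, trace_fin_two, trace_fin_two]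
  simp [add_comm]

theorem sq_fin_two (g : SpecialLinearGroup (Fin 2) R) :
    (g : Matrix (Fin 2) (Fin 2) R) ^ 2 = trace (g : Matrix (Fin 2) (Fin 2) R) • ↑g - 1 := by
  have hdet := g.det_coe
  rw [det_fin_two] at hdet
  ext i j
  fin_cases i <;> fin_cases j <;>
    simp only [Fin.zero_eta, Fin.mk_one, Fin.isValue, sq, mul_apply, Fin.sum_univ_two,
      trace_fin_two, sub_apply, smul_apply, smul_eq_mul, one_apply_eq, one_apply_ne, ne_eq,
      zero_ne_one, one_ne_zero, not_false_eq_true, sub_zero] <;>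
    first | ring1 | linear_combination -hdet

theorem trace_sq_fin_two (g : SpecialLinearGroup (Fin 2) R) :
    trace (↑(g ^ 2) : Matrix (Fin 2) (Fin 2) R) =
      trace (g : Matrix (Fin 2) (Fin 2) R) ^ 2 - 2 := by
  rw [coe_pow, sq_fin_two, trace_sub, trace_smul, trace_one, smul_eq_mul, sq]
  simp

theorem trace_mul_pow_add_two_fin_two (A : Matrix (Fin 2) (Fin 2) R)
    (g : SpecialLinearGroup (Fin 2) R) (j : ℕ) :
    trace (A * (g : Matrix (Fin 2) (Fin 2) R) ^ (j + 2)) =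
      trace (g : Matrix (Fin 2) (Fin 2) R) *
          trace (A * (g : Matrix (Fin 2) (Fin 2) R) ^ (j + 1)) -
        trace (A * (g : Matrix (Fin 2) (Fin 2) R) ^ j) := by
  have hpow : (g : Matrix (Fin 2) (Fin 2) R) ^ (j + 2) =
      trace (g : Matrix (Fin 2) (Fin 2) R) • (g : Matrix (Fin 2) (Fin 2) R) ^ (j + 1) -
        (g : Matrix (Fin 2) (Fin 2) R) ^ j := by
    rw [pow_add, sq_fin_two, mul_sub, Matrix.mul_smul, mul_one, ← pow_succ]
  rw [hpow, mul_sub, Matrix.mul_smul, trace_sub, trace_smul, smul_eq_mul]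

theorem trace_mul_mul_pow_fin_two (u v : SpecialLinearGroup (Fin 2) R)
    (h : trace (v : Matrix (Fin 2) (Fin 2) R) = trace (u : Matrix (Fin 2) (Fin 2) R)) :
    ∀ j, trace (↑(u * (u * v) ^ j) : Matrix (Fin 2) (Fin 2) R) =
      trace (u : Matrix (Fin 2) (Fin 2) R) *
        chebyshevW (trace (↑(u * v) : Matrix (Fin 2) (Fin 2) R)) j
  | 0 => by simp [chebyshevW]
  | 1 => by
    rw [pow_one, coe_mul, coe_mul, ← mul_assoc, ← sq, sq_fin_two, sub_mul, Matrix.smul_mul,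
      one_mul, trace_sub, trace_smul, smul_eq_mul, h, chebyshevW]
    ring
  | j + 2 => by
    have h0 := trace_mul_mul_pow_fin_two u v h j
    have h1 := trace_mul_mul_pow_fin_two u v h (j + 1)
    rw [coe_mul, coe_pow] at h0 h1 ⊢
    rw [trace_mul_pow_add_two_fin_two, h0, h1, chebyshevW_add_two]
    ring

end Matrix.SpecialLinearGroup

theorem GaloisField.not_isSquare_two {p : ℕ} [Fact p.Prime] {n : ℕ} (hn : Odd n)
    (h2 : ¬ IsSquare (2 : ZMod p)) : ¬ IsSquare (2 : GaloisField p n) := by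
  have hp2 : p ≠ 2 := by rintro rfl; exact h2 ⟨0, rfl⟩
  have hp_odd : p % 2 = 1 := (Nat.Prime.mod_two_eq_one_iff_ne_two Fact.out).mpr hp2
  rw [ZMod.exists_sq_eq_two_iff hp2] at h2
  have hp8 : p % 8 = 3 ∨ p % 8 = 5 := by omega
  have hsq8 : p ^ 2 % 8 = 1 := by
    rw [Nat.pow_mod]; rcases hp8 with h | h <;> rw [h]
  have := Fintype.ofFinite (GaloisField p n)
  obtain ⟨m, rfl⟩ := hn
  rw [FiniteField.isSquare_two_iff, ← Nat.card_eq_fintype_card, GaloisField.card p _ (by omega),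
    pow_succ, pow_mul, Nat.mul_mod, Nat.pow_mod, hsq8, one_pow, Nat.one_mod, one_mul, Nat.mod_mod]
  omega

theorem trace_word_value_ne_zero_general
    (k : ℕ) (ε : ℤ) (hε : ε = 1 ∨ ε = -1)
    (p : ℕ) [Fact p.Prime] (n : ℕ)
    (hodd : Odd n)
    (h2 : ¬ IsSquare (2 : ZMod p))
    (ζ : AlgebraicClosure (GaloisField p n))
    (hζ : IsPrimitiveRoot ζ (2 * k + 1))
    (hnot : ∀ i ∈ Finset.Icc 1 k, ∀ c : GaloisField p n,
      algebraMap (GaloisField p n) (AlgebraicClosure (GaloisField p n)) c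
        ≠ ζ ^ (i : ℤ) + ζ ^ (-(i : ℤ))) :
    (∀ x y : Matrix.SpecialLinearGroup (Fin 2) (GaloisField p n),
      Matrix.trace
        ((x ^ 2 * (x ^ 2 * y * x ^ (2 * ε) * y⁻¹) ^ k :
          Matrix.SpecialLinearGroup (Fin 2) (GaloisField p n)) :
          Matrix (Fin 2) (Fin 2) (GaloisField p n)) ≠ 0)
    ∧ ∀ g : Matrix.SpecialLinearGroup (Fin 2) (GaloisField p n),
        Matrix.trace ((g : Matrix (Fin 2) (Fin 2) (GaloisField p n))) = 0 →
        ∀ x y : Matrix.SpecialLinearGroup (Fin 2) (GaloisField p n),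
          x ^ 2 * (x ^ 2 * y * x ^ (2 * ε) * y⁻¹) ^ k ≠ g := by
  have hW (t : GaloisField p n) : chebyshevW t k ≠ 0 := by
    rw [← (algebraMap _ (AlgebraicClosure (GaloisField p n))).injective.ne_iff, map_chebyshevW,
      map_zero]
    exact chebyshevW_ne_zero hζ fun i hi h ↦ hnot i hi (-t) (by rw [map_neg, h, neg_neg])
  have htrace : ∀ x y : Matrix.SpecialLinearGroup (Fin 2) (GaloisField p n),
      Matrix.trace (↑(x ^ 2 * (x ^ 2 * y * x ^ (2 * ε) * y⁻¹) ^ k) :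
        Matrix (Fin 2) (Fin 2) (GaloisField p n)) ≠ 0 := by
    intro x y
    have hconj : Matrix.trace (↑(y * x ^ (2 * ε) * y⁻¹) : Matrix (Fin 2) (Fin 2) _) =
        Matrix.trace (↑(x ^ 2) : Matrix (Fin 2) (Fin 2) (GaloisField p n)) := by
      rw [y.trace_conj_s10]
      rcases hε with rfl | rfl
      · norm_num
      · rw [show 2 * (-1 : ℤ) = -(2 : ℕ) by norm_num, zpow_neg, zpow_natCast,
          (x ^ 2).trace_inv_fin_two]
    rw [show x ^ 2 * y * x ^ (2 * ε) * y⁻¹ = x ^ 2 * (y * x ^ (2 * ε) * y⁻¹) by group,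
      (x ^ 2).trace_mul_mul_pow_fin_two _ hconj, x.trace_sq_fin_two]
    have htr_sq : Matrix.trace (x : Matrix (Fin 2) (Fin 2) (GaloisField p n)) ^ 2 - 2 ≠ 0 :=
      fun h ↦ GaloisField.not_isSquare_two hodd h2 ⟨_, by linear_combination -h⟩
    exact mul_ne_zero htr_sq (hW _)
  exact ⟨htrace, fun g hg x y hxy ↦ htrace x y (hxy ▸ hg)⟩

/-- Key intermediate claim in the proof of Theorem 3.1: under the hypotheses of the
finite-field form of Theorem 3.1, every word value `x²·(x²·y·x^{2ε}·y⁻¹)^k` in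
`SL₂(𝔽_{p^n})` has nonzero trace; in particular no trace-zero element of `SL₂(𝔽_{p^n})`
is a value of this word. -/
theorem trace_word_value_ne_zero
    (k : ℕ) (hk : 1 ≤ k) (ε : ℤ) (hε : ε = 1 ∨ ε = -1)
    (p : ℕ) [Fact p.Prime] (n : ℕ) (hn : 0 < n)
    (hp : ¬ (p ∣ 2 * k + 1))
    (hodd : Odd n)
    (h2 : ¬ IsSquare (2 : ZMod p))
    (ζ : AlgebraicClosure (GaloisField p n))
    (hζ : IsPrimitiveRoot ζ (2 * k + 1))
    (hnot : ∀ i ∈ Finset.Icc 1 k, ∀ c : GaloisField p n,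
      algebraMap (GaloisField p n) (AlgebraicClosure (GaloisField p n)) c
        ≠ ζ ^ (i : ℤ) + ζ ^ (-(i : ℤ))) :
    (∀ x y : Matrix.SpecialLinearGroup (Fin 2) (GaloisField p n),
      Matrix.trace
        ((x ^ 2 * (x ^ 2 * y * x ^ (2 * ε) * y⁻¹) ^ k :
          Matrix.SpecialLinearGroup (Fin 2) (GaloisField p n)) :
          Matrix (Fin 2) (Fin 2) (GaloisField p n)) ≠ 0)
    ∧ ∀ g : Matrix.SpecialLinearGroup (Fin 2) (GaloisField p n),
        Matrix.trace ((g : Matrix (Fin 2) (Fin 2) (GaloisField p n))) = 0 →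
        ∀ x y : Matrix.SpecialLinearGroup (Fin 2) (GaloisField p n),
          x ^ 2 * (x ^ 2 * y * x ^ (2 * ε) * y⁻¹) ^ k ≠ g :=
  trace_word_value_ne_zero_general k ε hε p n hodd h2 ζ hζ hnot
end
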